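/- Let h⁰, h¹, u⁰, u¹, S⁰, S¹ ∈ ℝ and define the pointwise Hamiltonian H(u,h,S) = (1/2)(h u² + h S). Define the time-averaged variational derivatives F̄ = (2h⁰u⁰ + h⁰u¹ + h¹u⁰ + 2h¹u¹)/6, Φ̄ = (u⁰² + u⁰u¹ + u¹²)/6 + (S⁰ + S¹)/4, T̄ = (h⁰ + h¹)/4. Then H(u¹,h¹,S¹) − H(u⁰,h⁰,S⁰) = F̄·(u¹ − u⁰) + Φ̄·(h¹ − h⁰) + T̄·(S¹ − S⁰). -/
import Mathlib

theorem discrete_energy_conservation (h0 h1 u0 u1 S0 S1 : ℝ)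
    (H : ℝ → ℝ → ℝ → ℝ)
    (hH : ∀ u h S, H u h S = (1 / 2) * (h * u ^ 2 + h * S)) :
    H u1 h1 S1 - H u0 h0 S0 =
      ((2 * h0 * u0 + h0 * u1 + h1 * u0 + 2 * h1 * u1) / 6) * (u1 - u0) +
        ((u0 ^ 2 + u0 * u1 + u1 ^ 2) / 6 + (S0 + S1) / 4) * (h1 - h0) +
        ((h0 + h1) / 4) * (S1 - S0) := by
  rw [hH, hH]; ring
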